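/- Let n ≥ 2, let k be a field, let k⟨X⟩ be the free associative algebra over k on x_1,…,x_n, and let I be the two-sided ideal generated by { x_{σ(1)}⋯x_{σ(n)} − x_1⋯x_n : σ ∈ Sym_n }. Then for every m ≥ 1 and all indices 2 ≤ i_1,…,i_m ≤ n, the element x_ε·x_{i_1}x_{i_2}⋯x_{i_m}·x_1 − x_1·x_ε·x_{i_1}x_{i_2}⋯x_{i_m} belongs to I, where x_ε = x_1x_2⋯x_n. -/

import Mathlib

/-- The monomial of `k⟨X⟩` corresponding to a word `w` in the generators. -/
noncomputable def wordElem (k : Type) [Field k] {n : ℕ} (w : List (Fin n)) :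
    FreeAlgebra k (Fin n) :=
  (w.map (FreeAlgebra.ι k)).prod

/-- The monomial `x_ε = x_1 x_2 ⋯ x_n` of `k⟨X⟩`. -/
noncomputable def epsElem (k : Type) [Field k] (n : ℕ) : FreeAlgebra k (Fin n) :=
  wordElem k (List.ofFn fun i : Fin n => i)

/-- The set `{ x_{σ(1)} ⋯ x_{σ(n)} − x_1 ⋯ x_n : σ ∈ Sym_n }`. -/
noncomputable def relSet (k : Type) [Field k] (n : ℕ) : Set (FreeAlgebra k (Fin n)) :=
  { p | ∃ σ : Equiv.Perm (Fin n),
      p = wordElem k (List.ofFn fun i => σ i) - epsElem k n }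


/-!
Modulo the ideal, every word that uses each generator exactly once equals `x_ε`. Reading
`x_a · w · x_a` (with `w` the other letters in increasing order) in two ways shows that `x_ε`
commutes with every generator, and reading `x_a x_b · u · x_b x_a` (with `u` the remaining
letters) in two ways gives `x_a x_b x_ε = x_ε x_b x_a`, hence `x_ε x_a x_b = x_ε x_b x_a`.
So `x_ε · u` depends only on the letters of `u` up to order, and
`x_ε u x_1 = x_ε x_1 u = x_1 x_ε u` for every word `u`.
-/

namespace PermRelations

variable {k : Type} [Field k] {n : ℕ}

open FreeAlgebra

lemma wordElem_cons (a : Fin n) (w : List (Fin n)) :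
    wordElem k (a :: w) = ι k a * wordElem k w := by
  simp [wordElem]

lemma wordElem_append (v w : List (Fin n)) :
    wordElem k (v ++ w) = wordElem k v * wordElem k w := by
  simp [wordElem]

lemma wordElem_nil : wordElem k ([] : List (Fin n)) = 1 := rfl

variable (k n) in
noncomputable abbrev relMk :
    FreeAlgebra k (Fin n) →+* (TwoSidedIdeal.span (relSet k n)).ringCon.Quotient :=
  (TwoSidedIdeal.span (relSet k n)).ringCon.mk'

lemma relMk_eq_relMk_iff {a b : FreeAlgebra k (Fin n)} :
    relMk k n a = relMk k n b ↔ a - b ∈ TwoSidedIdeal.span (relSet k n) :=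
  (RingCon.eq _).trans (TwoSidedIdeal.rel_iff _ _ _)

lemma exists_perm_ofFn_eq_of_perm_finRange {w : List (Fin n)} (hw : w.Perm (List.finRange n)) :
    ∃ σ : Equiv.Perm (Fin n), (List.ofFn fun i => σ i) = w := by
  classical
  have hlen : w.length = n := by simpa using hw.length_eq
  let τ := List.Nodup.getEquivOfForallMemList w (hw.nodup_iff.mpr (List.nodup_finRange n))
    fun a => hw.mem_iff.mpr (List.mem_finRange a)
  refine ⟨(finCongr hlen.symm).trans τ, ?_⟩
  conv_rhs => rw [← List.ofFn_get w, List.ofFn_congr hlen]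
  rfl

lemma relMk_wordElem_of_perm_finRange {w : List (Fin n)} (hw : w.Perm (List.finRange n)) :
    relMk k n (wordElem k w) = relMk k n (epsElem k n) := by
  obtain ⟨σ, rfl⟩ := exists_perm_ofFn_eq_of_perm_finRange hw
  exact relMk_eq_relMk_iff.mpr (TwoSidedIdeal.subset_span ⟨σ, rfl⟩)

lemma commute_relMk_epsElem_ι (a : Fin n) :
    Commute (relMk k n (epsElem k n)) (relMk k n (ι k a)) := by
  set w := (List.finRange n).erase a
  have hcons : (a :: w).Perm (List.finRange n) := (List.perm_cons_erase (List.mem_finRange a)).symm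
  have hsnoc : (w ++ [a]).Perm (List.finRange n) := (List.perm_append_singleton a w).trans hcons
  calc relMk k n (epsElem k n) * relMk k n (ι k a)
      = relMk k n (wordElem k (a :: w)) * relMk k n (ι k a) := by
        rw [relMk_wordElem_of_perm_finRange hcons]
    _ = relMk k n (ι k a) * relMk k n (wordElem k (w ++ [a])) := by
        simp only [wordElem_cons, wordElem_append, wordElem_nil, map_mul, mul_one, mul_assoc]
    _ = relMk k n (ι k a) * relMk k n (epsElem k n) := by
        rw [relMk_wordElem_of_perm_finRange hsnoc]

lemma relMk_epsElem_mul_ι_mul_ι_comm (a b : Fin n) :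
    relMk k n (epsElem k n * ι k a * ι k b) = relMk k n (epsElem k n * ι k b * ι k a) := by
  obtain rfl | hab := eq_or_ne a b
  · rfl
  set u := ((List.finRange n).erase a).erase b
  have hb : b ∈ (List.finRange n).erase a :=
    (List.mem_erase_of_ne hab.symm).mpr (List.mem_finRange b)
  have hab_u : (a :: b :: u).Perm (List.finRange n) :=
    ((List.perm_cons_erase (List.mem_finRange a)).trans ((List.perm_cons_erase hb).cons a)).symm
  have hu_ba : (u ++ [b, a]).Perm (List.finRange n) :=
    List.perm_append_comm.trans ((List.Perm.swap a b u).trans hab_u)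
  simp only [map_mul]
  calc relMk k n (epsElem k n) * relMk k n (ι k a) * relMk k n (ι k b)
      = relMk k n (ι k a) * relMk k n (ι k b) * relMk k n (wordElem k (u ++ [b, a])) := by
        rw [relMk_wordElem_of_perm_finRange hu_ba, (commute_relMk_epsElem_ι a).eq, mul_assoc,
          (commute_relMk_epsElem_ι b).eq, ← mul_assoc]
    _ = relMk k n (wordElem k (a :: b :: u)) * relMk k n (ι k b) * relMk k n (ι k a) := by
        simp only [wordElem_cons, wordElem_append, wordElem_nil, map_mul, mul_one, mul_assoc]
    _ = relMk k n (epsElem k n) * relMk k n (ι k b) * relMk k n (ι k a) := by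
        rw [relMk_wordElem_of_perm_finRange hab_u]

lemma relMk_epsElem_mul_wordElem_of_perm {v w : List (Fin n)} (h : v.Perm w) :
    relMk k n (epsElem k n * wordElem k v) = relMk k n (epsElem k n * wordElem k w) := by
  induction h with
  | nil => rfl
  | cons a _ ih =>
    simp only [wordElem_cons, ← mul_assoc, map_mul] at ih ⊢
    rw [(commute_relMk_epsElem_ι a).eq, mul_assoc, ih, ← mul_assoc]
  | swap a b w =>
    simp only [wordElem_cons, ← mul_assoc]
    rw [map_mul, relMk_epsElem_mul_ι_mul_ι_comm, ← map_mul]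
  | trans _ _ ih₁ ih₂ => exact ih₁.trans ih₂

end PermRelations

open PermRelations in
/-- For every `m ≥ 1` and indices `i_1, …, i_m` with `2 ≤ i_t ≤ n` (0-indexed: values ≠ 0),
the element `x_ε·x_{i_1}⋯x_{i_m}·x_1 − x_1·x_ε·x_{i_1}⋯x_{i_m}` lies in the two-sided ideal
generated by the permutation relations. -/
theorem eps_x1_mem_span (n : ℕ) (hn : 2 ≤ n) (k : Type) [Field k]
    (l : List (Fin n)) :
    epsElem k n * wordElem k l * FreeAlgebra.ι k (⟨0, by omega⟩ : Fin n) -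
        FreeAlgebra.ι k (⟨0, by omega⟩ : Fin n) * epsElem k n * wordElem k l ∈
      TwoSidedIdeal.span (relSet k n) := by
  set x₁ : Fin n := ⟨0, by omega⟩
  rw [← relMk_eq_relMk_iff]
  calc relMk k n (epsElem k n * wordElem k l * FreeAlgebra.ι k x₁)
      = relMk k n (epsElem k n * wordElem k (l ++ [x₁])) := by
        rw [wordElem_append, wordElem_cons, wordElem_nil, mul_one, mul_assoc]
    _ = relMk k n (epsElem k n * wordElem k (x₁ :: l)) :=
        relMk_epsElem_mul_wordElem_of_perm (List.perm_append_singleton x₁ l)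
    _ = relMk k n (FreeAlgebra.ι k x₁ * epsElem k n * wordElem k l) := by
        simp only [wordElem_cons, map_mul, ← mul_assoc, (commute_relMk_epsElem_ι x₁).eq]
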